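/- arXiv:2505.06419 — 2 statements merged into one kernel-verified Lean document; each statement's English description precedes it below -/
import Mathlib

section
/- Let p* and p be probability mass functions on a finite product space Z × W such that the conditional distributions agree: p_{W|Z=a} = p*_{W|Z=a} for every a with p*_Z(a) > 0, and suppose the marginal of p on Z is the product of the true marginals: p_Z(z₁) = p*_{Z₁}(z₁)·p*_{Z₂}(z₂) when Z = Z₁ × Z₂ and z = (z₁,z₂). Then D_KL(p* ‖ p) = I_{p*}(Z₁; Z₂), the mutual information between the two components of Z under the marginal p*_Z. -/
open Finset

/-- if `p` matches all conditionals of `p*` given `z = (z₁,z₂)` and its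
marginal on `Z = Z₁ × Z₂` is the product of the true single-site marginals, then
`D_KL(p* ‖ p)` equals the mutual information `I_{p*}(Z₁; Z₂)` of the marginal of `p*` on `Z`. -/
theorem stmt4 {Z₁ Z₂ W : Type*} [Fintype Z₁] [Fintype Z₂] [Fintype W]
    (ps p : (Z₁ × Z₂) × W → ℝ)
    (hps : ∀ x, 0 < ps x) (hp : ∀ x, 0 < p x)
    (hps1 : ∑ x, ps x = 1) (hp1 : ∑ x, p x = 1)
    (hcond : ∀ z w, p (z, w) / (∑ w', p (z, w')) = ps (z, w) / (∑ w', ps (z, w')))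
    (hmarg : ∀ z₁ z₂, (∑ w, p ((z₁, z₂), w)) =
        (∑ z₂', ∑ w, ps ((z₁, z₂'), w)) * (∑ z₁', ∑ w, ps ((z₁', z₂), w))) :
    (∑ x, ps x * Real.log (ps x / p x))
      = ∑ z₁, ∑ z₂, (∑ w, ps ((z₁, z₂), w)) *
          Real.log ((∑ w, ps ((z₁, z₂), w)) /
            ((∑ z₂', ∑ w, ps ((z₁, z₂'), w)) * (∑ z₁', ∑ w, ps ((z₁', z₂), w)))) := by
  have hX : Nonempty ((Z₁ × Z₂) × W) := by
    by_contra h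
    rw [not_nonempty_iff] at h
    simp at hps1
  have hW : Nonempty W := ⟨hX.some.2⟩
  have hpsZ : ∀ z : Z₁ × Z₂, 0 < ∑ w, ps (z, w) :=
    fun z => Finset.sum_pos (fun w _ => hps _) Finset.univ_nonempty
  have hpZ : ∀ z : Z₁ × Z₂, 0 < ∑ w, p (z, w) :=
    fun z => Finset.sum_pos (fun w _ => hp _) Finset.univ_nonempty
  have key : ∀ z w, ps (z, w) / p (z, w) = (∑ w', ps (z, w')) / (∑ w', p (z, w')) := by
    intro z w
    rw [div_eq_div_iff (hp _).ne' (hpZ z).ne']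
    have h := hcond z w
    rw [div_eq_div_iff (hpZ z).ne' (hpsZ z).ne'] at h
    linarith
  calc ∑ x, ps x * Real.log (ps x / p x)
      = ∑ z : Z₁ × Z₂, ∑ w, ps (z, w) *
          Real.log ((∑ w', ps (z, w')) / (∑ w', p (z, w'))) := by
        rw [Fintype.sum_prod_type]
        exact Finset.sum_congr rfl fun z _ => Finset.sum_congr rfl fun w _ => by rw [key]
    _ = ∑ z : Z₁ × Z₂, (∑ w, ps (z, w)) *
          Real.log ((∑ w', ps (z, w')) / (∑ w', p (z, w'))) := by
        simp [Finset.sum_mul]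
    _ = ∑ z₁, ∑ z₂, (∑ w, ps ((z₁, z₂), w)) *
          Real.log ((∑ w, ps ((z₁, z₂), w)) /
            ((∑ z₂', ∑ w, ps ((z₁, z₂'), w)) * (∑ z₁', ∑ w, ps ((z₁', z₂), w)))) := by
        rw [Fintype.sum_prod_type]
        exact Finset.sum_congr rfl fun z₁ _ => Finset.sum_congr rfl fun z₂ _ => by
          rw [hmarg]
end

section
/- Fix an index i and let q : R^{d₁} × ⋯ × R^{dₙ} → R^N be multilinear in its blocks. For parameters θ = (G₁,...,Gₙ), an update δθ supported on block i, and learning rate 1/η, the following two updates of θ produce the same new tensor q: (a) the NGD update δθ* minimizing ⟨∇_θ(F∘q)(θ), δθ⟩ + (η/2)‖q(θ+δθ) - q(θ)‖²_F over block-i-supported δθ; (b) first apply an invertible gauge transformation to θ putting it in a form where the block-i Jacobian M of q is an isometry (MᵀM = I), then do plain gradient descent Gᵢ ← Gᵢ - (1/η)∇_{Gᵢ}(F∘q) in the transformed coordinates. In both cases the tensor updates to q(θ) - (1/η) MM⁺ ∇F(q(θ)). -/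
open Matrix Finset

lemma affine_fderiv' {d N : ℕ} (F : (Fin N → ℝ) → ℝ) (c : Fin N → ℝ)
    (A : Matrix (Fin N) (Fin d) ℝ) (x₀ : Fin d → ℝ)
    (hFd : DifferentiableAt ℝ F c) (gF : Fin N → ℝ)
    (hF : ∀ v, fderiv ℝ F c v = gF ⬝ᵥ v) (v : Fin d → ℝ) :
    fderiv ℝ (fun g => F (c + A *ᵥ (g - x₀))) x₀ v = gF ⬝ᵥ (A *ᵥ v) := by
  set Ac : (Fin d → ℝ) →L[ℝ] (Fin N → ℝ) := (Matrix.mulVecLin A).toContinuousLinearMap with hAc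
  have h1 : HasFDerivAt (fun g : Fin d → ℝ => c + A *ᵥ (g - x₀)) Ac x₀ := by
    have : (fun g : Fin d → ℝ => c + A *ᵥ (g - x₀)) = fun g => (c - A *ᵥ x₀) + Ac g := by
      funext g
      simp [hAc, Matrix.mulVec_sub]
      abel
    rw [this]
    exact Ac.hasFDerivAt.const_add _
  have h2 : HasFDerivAt F (fderiv ℝ F c) (c + A *ᵥ (x₀ - x₀)) := by
    simpa using hFd.hasFDerivAt
  have h3 := h2.comp x₀ h1
  have h4 : HasFDerivAt (fun g => F (c + A *ᵥ (g - x₀))) ((fderiv ℝ F c).comp Ac) x₀ := h3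
  rw [h4.fderiv]
  simp [hAc, hF]

lemma quadId {N : ℕ} (η : ℝ) (gF u w : Fin N → ℝ) :
    (gF ⬝ᵥ u + η / 2 * (u ⬝ᵥ u)) - (gF ⬝ᵥ w + η / 2 * (w ⬝ᵥ w))
      = (gF + η • w) ⬝ᵥ (u - w) + η / 2 * ((u - w) ⬝ᵥ (u - w)) := by
  simp [add_dotProduct, dotProduct_add, sub_dotProduct,
    dotProduct_sub, smul_dotProduct, dotProduct_comm w u,
    smul_eq_mul]
  ring

/-- equivalence of the single-site NGD step and plain gradient descent
in a gauge where the block-`i` Jacobian is an isometry. If `q` is affine in block `i`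
with full-column-rank Jacobian `M`, `T` is an invertible gauge with `(MT)ᵀ(MT) = 1`,
then (a) the NGD minimizer `δ₁` and (b) the plain GD step
`δ₂ = -(1/η)∇_{G̃}(F∘q)` in the transformed coordinates produce the same new tensor,
namely `q(θ) - (1/η) M M⁺ ∇F(q(θ))` (with `M M⁺ = M (MᵀM)⁻¹ Mᵀ`). -/
theorem stmt18 {n d N : ℕ} (q : (Fin n → (Fin d → ℝ)) → (Fin N → ℝ))
    (F : (Fin N → ℝ) → ℝ) (i : Fin n) (θ : Fin n → Fin d → ℝ)
    (M : Matrix (Fin N) (Fin d) ℝ)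
    (hM : LinearIndependent ℝ (fun j : Fin d => Mᵀ j))
    (haff : ∀ δ, q (Function.update θ i (θ i + δ)) = q θ + M *ᵥ δ)
    (hFd : DifferentiableAt ℝ F (q θ))
    (gF : Fin N → ℝ)
    (hF : ∀ v, fderiv ℝ F (q θ) v = gF ⬝ᵥ v)
    (η : ℝ) (hη : 0 < η)
    (T : Matrix (Fin d) (Fin d) ℝ) (hT : IsUnit T.det)
    (hiso : (M * T)ᵀ * (M * T) = 1)
    (Gt : Fin d → ℝ) (hGt : θ i = T *ᵥ Gt)
    (δ₁ δ₂ : Fin d → ℝ)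
    (hmin1 : ∀ δ : Fin d → ℝ,
      fderiv ℝ (fun g => F (q (Function.update θ i g))) (θ i) δ₁
          + η / 2 * ∑ k, (q (Function.update θ i (θ i + δ₁)) k - q θ k) ^ 2
        ≤ fderiv ℝ (fun g => F (q (Function.update θ i g))) (θ i) δ
          + η / 2 * ∑ k, (q (Function.update θ i (θ i + δ)) k - q θ k) ^ 2)
    (hgd : δ₂ = fun j => -(1 / η) *
        fderiv ℝ (fun g => F (q (Function.update θ i (T *ᵥ g)))) Gt (Pi.single j 1)) :
    q (Function.update θ i (θ i + δ₁)) = q (Function.update θ i (T *ᵥ (Gt + δ₂)))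
    ∧ q (Function.update θ i (θ i + δ₁))
        = fun k => q θ k - (1 / η) * ((M * (Mᵀ * M)⁻¹ * Mᵀ) *ᵥ gF) k := by
  have hη' : η ≠ 0 := ne_of_gt hη
  set P := M * T with hP
  -- invertibility : (Mᵀ M)⁻¹ = T Tᵀ
  have hdetT' : IsUnit Tᵀ.det := by simpa [Matrix.det_transpose] using hT
  have hTAT : Tᵀ * (Mᵀ * M * T) = 1 := by
    have h := hiso
    rw [Matrix.transpose_mul] at h
    simpa [Matrix.mul_assoc] using h
  have hATinv : (Tᵀ)⁻¹ = Mᵀ * M * T := Matrix.inv_eq_right_inv hTAT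
  have hright : (Mᵀ * M) * (T * Tᵀ) = 1 := by
    calc (Mᵀ * M) * (T * Tᵀ) = (Mᵀ * M * T) * Tᵀ := by simp only [Matrix.mul_assoc]
    _ = (Tᵀ)⁻¹ * Tᵀ := by rw [hATinv]
    _ = 1 := Matrix.nonsing_inv_mul _ hdetT'
  have hinvA : (Mᵀ * M)⁻¹ = T * Tᵀ := Matrix.inv_eq_right_inv hright
  have hproj : M * (Mᵀ * M)⁻¹ * Mᵀ = P * Pᵀ := by
    rw [hinvA, hP, Matrix.transpose_mul]
    simp [Matrix.mul_assoc]
  -- affine form of q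
  have hq : ∀ g, q (Function.update θ i g) = q θ + M *ᵥ (g - θ i) := by
    intro g
    have h := haff (g - θ i)
    simpa using h
  -- derivative of the untransformed objective
  have hD1 : ∀ v, fderiv ℝ (fun g => F (q (Function.update θ i g))) (θ i) v
      = gF ⬝ᵥ (M *ᵥ v) := by
    intro v
    have he : (fun g => F (q (Function.update θ i g)))
        = fun g => F (q θ + M *ᵥ (g - θ i)) := funext fun g => by rw [hq]
    rw [he]
    exact affine_fderiv' F (q θ) M (θ i) hFd gF hF v
  -- derivative of the transformed objective
  have hq2 : ∀ g, q (Function.update θ i (T *ᵥ g)) = q θ + P *ᵥ (g - Gt) := by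
    intro g
    rw [hq (T *ᵥ g), hGt, ← Matrix.mulVec_sub, hP, ← Matrix.mulVec_mulVec]
  have hD2 : ∀ v, fderiv ℝ (fun g => F (q (Function.update θ i (T *ᵥ g)))) Gt v
      = gF ⬝ᵥ (P *ᵥ v) := by
    intro v
    have he : (fun g => F (q (Function.update θ i (T *ᵥ g))))
        = fun g => F (q θ + P *ᵥ (g - Gt)) := funext fun g => by rw [hq2]
    rw [he]
    exact affine_fderiv' F (q θ) P Gt hFd gF hF v
  -- value of δ₂
  have hδ₂ : δ₂ = -(1 / η) • (Pᵀ *ᵥ gF) := by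
    funext j
    simp only [hgd]
    rw [hD2]
    have hsingle : gF ⬝ᵥ (P *ᵥ Pi.single j 1) = (Pᵀ *ᵥ gF) j := by
      simp [Matrix.mulVec, dotProduct, Matrix.transpose_apply,
        Pi.single_apply, mul_ite, mul_one, mul_zero, Finset.sum_ite_eq', mul_comm]
    rw [hsingle]
    simp [smul_eq_mul]
  -- the GD side produces q θ + w where w = -(1/η) • (P Pᵀ gF)
  set w : Fin N → ℝ := -(1 / η) • ((P * Pᵀ) *ᵥ gF) with hw
  have hside2 : q (Function.update θ i (T *ᵥ (Gt + δ₂))) = q θ + w := by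
    rw [hq2, add_sub_cancel_left, hδ₂, Matrix.mulVec_smul, Matrix.mulVec_mulVec]
  -- orthogonality : Mᵀ (P Pᵀ) = Mᵀ
  have horth : Mᵀ * (P * Pᵀ) = Mᵀ := by
    rw [hP, Matrix.transpose_mul]
    calc Mᵀ * (M * T * (Tᵀ * Mᵀ)) = ((Mᵀ * M) * (T * Tᵀ)) * Mᵀ := by
          simp only [Matrix.mul_assoc]
    _ = Mᵀ := by rw [hright, Matrix.one_mul]
  -- rewrite the optimality condition
  have hsum : ∀ δ : Fin d → ℝ, ∑ k, (q (Function.update θ i (θ i + δ)) k - q θ k) ^ 2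
      = (M *ᵥ δ) ⬝ᵥ (M *ᵥ δ) := by
    intro δ
    rw [haff δ]
    simp [dotProduct, pow_two]
  -- choose δ so that M δ = w : δs = T δ₂
  set δs : Fin d → ℝ := T *ᵥ δ₂ with hδs
  have hMδs : M *ᵥ δs = w := by
    rw [hδs, Matrix.mulVec_mulVec, ← hP, hδ₂, Matrix.mulVec_smul, Matrix.mulVec_mulVec]
  set u : Fin N → ℝ := M *ᵥ δ₁ with hu
  have hmin := hmin1 δs
  rw [hD1, hD1, hsum, hsum, hMδs, ← hu] at hmin
  -- orthogonality of the residual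
  have hzero : (gF + η • w) ⬝ᵥ (u - w) = 0 := by
    have hgw : gF + η • w = gF - (P * Pᵀ) *ᵥ gF := by
      have h : η * -(1 / η) = -1 := by field_simp
      rw [hw, smul_smul, h, neg_one_smul, ← sub_eq_add_neg]
    have huw : u - w = M *ᵥ (δ₁ - δs) := by rw [Matrix.mulVec_sub, hu, hMδs]
    rw [hgw, huw, Matrix.dotProduct_mulVec]
    have hv : (gF - (P * Pᵀ) *ᵥ gF) ᵥ* M = 0 := by
      rw [← Matrix.mulVec_transpose, Matrix.mulVec_sub, Matrix.mulVec_mulVec, horth,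
        sub_self]
    rw [hv, zero_dotProduct]
  -- quadratic identity forces u = w
  have hquad := quadId η gF u w
  have hs0 : 0 ≤ (u - w) ⬝ᵥ (u - w) := by
    simp only [dotProduct]
    exact Finset.sum_nonneg fun k _ => mul_self_nonneg _
  have hsz : (u - w) ⬝ᵥ (u - w) = 0 := by nlinarith
  have huweq : u = w := sub_eq_zero.mp (dotProduct_self_eq_zero.mp hsz)
  have hside1 : q (Function.update θ i (θ i + δ₁)) = q θ + w := by
    rw [haff δ₁, ← hu, huweq]
  refine ⟨by rw [hside1, hside2], ?_⟩
  rw [hside1]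
  funext k
  rw [hproj]
  simp [hw]
  ring
end
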